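/- Let N be a positive integer coprime to 3 and r coprime to N. Then the number of solutions (a, b) ∈ (ℤ/Nℤ)² to a² + ab + b² = −r equals N · ∏_{p | N} (1 − (1/p)·((−3/p))), where ((−3/p)) denotes the Kronecker symbol of −3 modulo p (so ((−3/2)) = −1). -/

import Mathlib

/-! The form `a² + ab + b²` is the norm form of the Eisenstein integers. Its number of
representations of a unit modulo `N` is multiplicative in `N` by the Chinese remainder theorem.
Over `𝔽_p` with `p` odd, completing the square gives `#{a² + ab + b² = c} = ∑ₐ (1 + χ(4c - 3a²))`,
and the character sum equals `-χ(-3)` by the Jacobi sum `J(χ, χ) = -χ(-1)`. Modulo `p^(k+1)`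
every solution modulo `p^k` lifts in exactly `p` ways: the kernel of the reduction squares to zero,
so on a fibre the equation becomes linear, and it is nondegenerate because the gradient
`(2a + b, a + 2b)` cannot vanish modulo `p` when `3` and `c` are units. -/

open scoped Classical
open Finset

noncomputable def eisensteinReps (R : Type*) [CommRing R] (c : R) : ℕ :=
  Nat.card {v : R × R // v.1 ^ 2 + v.1 * v.2 + v.2 ^ 2 = c}

section Ring

variable {R S : Type*} [CommRing R] [CommRing S]

theorem eisensteinReps_congr (e : R ≃+* S) (c : R) :
    eisensteinReps S (e c) = eisensteinReps R c :=
  Nat.card_congr <| .symm <| (e.toEquiv.prodCongr e.toEquiv).subtypeEquiv fun v => by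
    simp [← map_pow, ← map_mul, ← map_add]

theorem eisensteinReps_prod (c : R) (d : S) :
    eisensteinReps (R × S) (c, d) = eisensteinReps R c * eisensteinReps S d := by
  rw [eisensteinReps, eisensteinReps, eisensteinReps, ← Nat.card_prod,
    ← Nat.card_congr Equiv.subtypeProdEquivProd]
  refine Nat.card_congr ((Equiv.prodProdProdComm R S R S).subtypeEquiv fun v => ?_)
  simp [Prod.ext_iff]

theorem eisensteinReps_zmod_mul {m n : ℕ} (h : m.Coprime n) (c : ℤ) :
    eisensteinReps (ZMod (m * n)) c = eisensteinReps (ZMod m) c * eisensteinReps (ZMod n) c := by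
  rw [← eisensteinReps_congr (ZMod.chineseRemainder h), map_intCast, ← eisensteinReps_prod]
  rfl

end Ring

theorem four_ne_zero_of_ringChar_ne_two {F : Type*} [Field F] (hF : ringChar F ≠ 2) :
    (4 : F) ≠ 0 := by
  simpa [show (4 : F) = 2 ^ 2 by norm_num] using Ring.two_ne_zero hF

section FiniteField

variable {F : Type*} [Field F] [Fintype F] [DecidableEq F]

theorem quadraticChar_natCard_sqrts (hF : ringChar F ≠ 2) (a : F) :
    (Nat.card {x : F // x ^ 2 = a} : ℤ) = quadraticChar F a + 1 := by
  rw [← quadraticChar_card_sqrts hF a, Nat.card_eq_fintype_card, Set.toFinset_card]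
  rfl

theorem sum_comp_sq (hF : ringChar F ≠ 2) (g : F → ℤ) :
    ∑ x, g (x ^ 2) = ∑ u, (quadraticChar F u + 1) * g u := by
  rw [← sum_fiberwise univ (· ^ 2) (fun x => g (x ^ 2))]
  refine sum_congr rfl fun u _ => ?_
  rw [← quadraticChar_natCard_sqrts hF, sum_congr rfl fun x hx => congrArg g (mem_filter.mp hx).2,
    sum_const, Nat.card_eq_fintype_card, Fintype.card_subtype, nsmul_eq_mul]

theorem sum_quadraticChar_affine (hF : ringChar F ≠ 2) {a : F} (ha : a ≠ 0) (b : F) :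
    ∑ u, quadraticChar F (a * u + b) = 0 := by
  rw [← quadraticChar_sum_zero hF]
  exact Fintype.sum_equiv ((Equiv.mulLeft₀ a ha).trans (Equiv.addRight b)) _ _ fun _ => rfl

theorem sum_quadraticChar_mul_affine (hF : ringChar F ≠ 2) {a b : F} (ha : a ≠ 0) (hb : b ≠ 0) :
    ∑ u, quadraticChar F u * quadraticChar F (a * u + b) = -quadraticChar F a := by
  set χ := quadraticChar F
  have hJ : jacobiSum χ χ = -χ (-1) := by
    have := jacobiSum_nontrivial_inv (quadraticChar_ne_one hF)
    rwa [(quadraticChar_isQuadratic F).inv] at this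
  have hs : -(b / a) ≠ 0 := by simp [ha, hb]
  calc ∑ u, χ u * χ (a * u + b)
      = ∑ t, χ (-(b / a) * t) * χ (a * (-(b / a) * t) + b) :=
        (Fintype.sum_equiv (Equiv.mulLeft₀ _ hs) _ _ fun _ => rfl).symm
    _ = ∑ t, χ (-(b / a) * b) * (χ t * χ (1 - t)) := by
        refine sum_congr rfl fun t _ => ?_
        simp only [← map_mul]
        congr 1
        field_simp
        ring
    _ = χ (-(b / a) * b) * jacobiSum χ χ := by rw [jacobiSum, mul_sum]
    _ = -χ ((b / a) ^ 2 * a) := by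
        rw [hJ, mul_neg, ← map_mul]
        congr 2
        field_simp
    _ = -χ a := by rw [map_mul, quadraticChar_sq_one' (div_ne_zero hb ha), one_mul]

theorem sum_quadraticChar_mul_sq_add (hF : ringChar F ≠ 2) {a b : F} (ha : a ≠ 0) (hb : b ≠ 0) :
    ∑ x, quadraticChar F (a * x ^ 2 + b) = -quadraticChar F a := by
  rw [sum_comp_sq hF (fun u => quadraticChar F (a * u + b))]
  simp only [add_mul, one_mul, sum_add_distrib, sum_quadraticChar_mul_affine hF ha hb,
    sum_quadraticChar_affine hF ha, add_zero]

theorem card_eisenstein_of_fst (hF : ringChar F ≠ 2) (a c : F) :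
    (Nat.card {y : F // a ^ 2 + a * y + y ^ 2 = c} : ℤ) =
      quadraticChar F (-3 * a ^ 2 + 4 * c) + 1 := by
  have h2 : (2 : F) ≠ 0 := Ring.two_ne_zero hF
  rw [← quadraticChar_natCard_sqrts hF]
  congr 1
  refine Nat.card_congr
    (((Equiv.mulLeft₀ 2 h2).trans (Equiv.addRight a)).subtypeEquiv fun y => ?_)
  simp only [Equiv.trans_apply, Equiv.mulLeft₀_apply, Equiv.coe_addRight]
  constructor <;> intro h
  · linear_combination 4 * h
  · exact mul_left_cancel₀ (four_ne_zero_of_ringChar_ne_two hF) (by linear_combination h)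

theorem eisensteinReps_of_field (hF : ringChar F ≠ 2) (h3 : (3 : F) ≠ 0) {c : F} (hc : c ≠ 0) :
    (eisensteinReps F c : ℤ) = Fintype.card F - quadraticChar F (-3) := by
  rw [eisensteinReps, Nat.card_congr (Equiv.subtypeProdEquivSigmaSubtype
    fun a y => a ^ 2 + a * y + y ^ 2 = c), Nat.card_sigma, Nat.cast_sum]
  have h4c : 4 * c ≠ 0 := mul_ne_zero (four_ne_zero_of_ringChar_ne_two hF) hc
  simp only [card_eisenstein_of_fst hF, sum_add_distrib,
    sum_quadraticChar_mul_sq_add hF (neg_ne_zero.mpr h3) h4c, sum_const, card_univ, nsmul_one]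
  ring

end FiniteField

section SquareZeroLift

variable {R S : Type*} [CommRing R] [CommRing S]

theorem isUnit_or_isUnit_of_isUnit_eisenstein [IsLocalRing R] (h3 : IsUnit (3 : R)) {a b : R}
    (hab : IsUnit (a ^ 2 + a * b + b ^ 2)) : IsUnit (2 * a + b) ∨ IsUnit (a + 2 * b) := by
  by_contra! h
  set m := IsLocalRing.maximalIdeal R
  have hα : 2 * a + b ∈ m := h.1
  have hβ : a + 2 * b ∈ m := h.2
  have h3m : (3 : R) ∉ m := IsLocalRing.notMem_maximalIdeal.mpr h3
  have hm := (IsLocalRing.maximalIdeal.isMaximal R).isPrime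
  have ha : a ∈ m := by
    refine (hm.mem_or_mem ?_).resolve_left h3m
    convert m.sub_mem (m.mul_mem_left 2 hα) hβ using 1
    ring
  have hb : b ∈ m := by
    refine (hm.mem_or_mem ?_).resolve_left h3m
    convert m.sub_mem (m.mul_mem_left 2 hβ) hα using 1
    ring
  exact IsLocalRing.notMem_maximalIdeal.mpr hab <|
    m.add_mem (m.add_mem (m.pow_mem_of_mem ha 2 two_pos) (m.mul_mem_right b ha))
      (m.pow_mem_of_mem hb 2 two_pos)

theorem card_linear_eq_in_ideal (I : Ideal R) {α β e : R} (hαβ : IsUnit α ∨ IsUnit β)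
    (he : e ∈ I) : Nat.card {u : I × I // α * u.1 + β * u.2 = e} = Nat.card I := by
  wlog hα : IsUnit α generalizing α β
  · rw [← this (hαβ.symm) (hαβ.resolve_left hα)]
    exact Nat.card_congr ((Equiv.prodComm I I).subtypeEquiv fun u => by simp [add_comm])
  obtain ⟨α, rfl⟩ := hα
  refine Nat.card_congr (Equiv.symm
    { toFun t := ⟨(⟨↑α⁻¹ * (e - β * t), I.mul_mem_left _ (I.sub_mem he (I.mul_mem_left _ t.2))⟩, t),
        by simp⟩
      invFun u := u.1.2
      left_inv _ := rfl
      right_inv u := Subtype.ext (Prod.ext (Subtype.ext ?_) rfl) })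
  simp [← u.2]

theorem card_fiber_eisenstein [IsLocalRing R] (f : R →+* S)
    (hsq : ∀ x ∈ RingHom.ker f, ∀ y ∈ RingHom.ker f, x * y = 0) (h3 : IsUnit (3 : R)) {c : R}
    (hc : IsUnit c) {a b : R} (hab : f (a ^ 2 + a * b + b ^ 2) = f c) :
    Nat.card {v : R × R // v.1 ^ 2 + v.1 * v.2 + v.2 ^ 2 = c ∧ f v.1 = f a ∧ f v.2 = f b} =
      Nat.card (RingHom.ker f) := by
  set K := RingHom.ker f
  have he : c - (a ^ 2 + a * b + b ^ 2) ∈ K := by simp [K, RingHom.mem_ker, hab]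
  have hQ : IsUnit (a ^ 2 + a * b + b ^ 2) := by
    have hnil : IsNilpotent (c - (a ^ 2 + a * b + b ^ 2)) := ⟨2, by rw [sq]; exact hsq _ he _ he⟩
    simpa using hnil.neg.isUnit_add_left_of_commute hc (Commute.all _ _)
  have hexpand : ∀ x ∈ K, ∀ y ∈ K, (a + x) ^ 2 + (a + x) * (b + y) + (b + y) ^ 2 =
      a ^ 2 + a * b + b ^ 2 + ((2 * a + b) * x + (a + 2 * b) * y) := by
    intro x hx y hy
    linear_combination hsq x hx x hx + hsq x hx y hy + hsq y hy y hy
  have hsub {x y : R} (h : f x = f y) : x - y ∈ K := by simp [K, RingHom.mem_ker, h]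
  have hadd {x y : R} (hy : y ∈ K) : f (x + y) = f x := by simpa [K, RingHom.mem_ker] using hy
  rw [← card_linear_eq_in_ideal K (isUnit_or_isUnit_of_isUnit_eisenstein h3 hQ) he]
  exact Nat.card_congr
    { toFun v := ⟨(⟨v.1.1 - a, hsub v.2.2.1⟩, ⟨v.1.2 - b, hsub v.2.2.2⟩), by
        linear_combination v.2.1 - hexpand _ (hsub v.2.2.1) _ (hsub v.2.2.2)⟩
      invFun u := ⟨(a + u.1.1, b + u.1.2),
        by linear_combination hexpand _ u.1.1.2 _ u.1.2.2 + u.2, hadd u.1.1.2, hadd u.1.2.2⟩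
      left_inv v := by ext <;> simp
      right_inv u := by ext <;> simp }

theorem eisensteinReps_eq_card_ker_mul [IsLocalRing R] [Finite R] (f : R →+* S)
    (hf : Function.Surjective f) (hsq : ∀ x ∈ RingHom.ker f, ∀ y ∈ RingHom.ker f, x * y = 0)
    (h3 : IsUnit (3 : R)) {c : R} (hc : IsUnit c) :
    eisensteinReps R c = Nat.card (RingHom.ker f) * eisensteinReps S (f c) := by
  have : Finite S := Finite.of_surjective f hf
  let reduce (v : {v : R × R // v.1 ^ 2 + v.1 * v.2 + v.2 ^ 2 = c}) :
      {w : S × S // w.1 ^ 2 + w.1 * w.2 + w.2 ^ 2 = f c} :=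
    ⟨(f v.1.1, f v.1.2), by simp [← v.2]⟩
  have hfiber (w : {w : S × S // w.1 ^ 2 + w.1 * w.2 + w.2 ^ 2 = f c}) :
      Nat.card {v // reduce v = w} = Nat.card (RingHom.ker f) := by
    obtain ⟨a, ha⟩ := hf w.1.1
    obtain ⟨b, hb⟩ := hf w.1.2
    rw [← card_fiber_eisenstein f hsq h3 hc (a := a) (b := b) (by simp [ha, hb, w.2])]
    refine Nat.card_congr ((Equiv.subtypeEquivRight fun v => ?_).trans
      (Equiv.subtypeSubtypeEquivSubtypeInter _ fun v : R × R => f v.1 = f a ∧ f v.2 = f b))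
    simp [reduce, Subtype.ext_iff, Prod.ext_iff, ha, hb]
  have := Fintype.ofFinite {w : S × S // w.1 ^ 2 + w.1 * w.2 + w.2 ^ 2 = f c}
  rw [eisensteinReps, Nat.card_congr (Equiv.sigmaFiberEquiv reduce).symm, Nat.card_sigma,
    Fintype.sum_congr _ _ hfiber, sum_const, card_univ, ← Nat.card_eq_fintype_card, smul_eq_mul,
    mul_comm, eisensteinReps]

end SquareZeroLift

theorem card_ker_mul_card_of_surjective {R S : Type*} [CommRing R] [CommRing S] (f : R →+* S)
    (hf : Function.Surjective f) : Nat.card (RingHom.ker f) * Nat.card S = Nat.card R := by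
  have h := (f : R →+ S).ker.card_mul_index
  rwa [AddSubgroup.index_ker, AddMonoidHom.range_eq_top.mpr hf, AddSubgroup.card_top] at h

namespace ZMod

theorem isUnit_intCast_iff_not_dvd_pow {p d : ℕ} (hp : p.Prime) (hd : 0 < d) {z : ℤ} :
    IsUnit (z : ZMod (p ^ d)) ↔ ¬ (p : ℤ) ∣ z := by
  obtain ⟨m, rfl | rfl⟩ := z.eq_nat_or_neg
  · simp [isUnit_natCast_iff_not_dvd_pow hp hd, Int.ofNat_dvd]
  · simp [isUnit_natCast_iff_not_dvd_pow hp hd, Int.ofNat_dvd]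

instance {p n : ℕ} [hp : Fact p.Prime] : IsLocalRing (ZMod (p ^ (n + 1))) := by
  have : Fact (1 < p ^ (n + 1)) := ⟨Nat.one_lt_pow n.succ_ne_zero hp.out.one_lt⟩
  refine IsLocalRing.of_nonunits_add fun a b ha hb => ?_
  obtain ⟨a, rfl⟩ := natCast_zmod_surjective a
  obtain ⟨b, rfl⟩ := natCast_zmod_surjective b
  simp only [mem_nonunits_iff, ← Nat.cast_add, isUnit_natCast_iff_not_dvd_pow hp.out n.succ_pos,
    not_not] at ha hb ⊢
  exact dvd_add ha hb

theorem mul_eq_zero_of_mem_ker_castHom {m n : ℕ} [NeZero n] (h : m ∣ n) (hn : n ∣ m ^ 2)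
    {x y : ZMod n} (hx : x ∈ RingHom.ker (castHom h (ZMod m)))
    (hy : y ∈ RingHom.ker (castHom h (ZMod m))) : x * y = 0 := by
  have hdvd {z : ZMod n} (hz : z ∈ RingHom.ker (castHom h (ZMod m))) : m ∣ z.val := by
    rwa [RingHom.mem_ker, ← natCast_zmod_val z, map_natCast, natCast_eq_zero_iff] at hz
  rw [← natCast_zmod_val x, ← natCast_zmod_val y, ← Nat.cast_mul, natCast_eq_zero_iff]
  exact hn.trans (sq m ▸ mul_dvd_mul (hdvd hx) (hdvd hy))

theorem three_ne_zero {p : ℕ} [Fact p.Prime] (hp3 : p ≠ 3) : (3 : ZMod p) ≠ 0 := by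
  rw [← Nat.cast_ofNat, Ne, natCast_eq_zero_iff,
    Nat.prime_dvd_prime_iff_eq Fact.out Nat.prime_three]
  exact hp3

end ZMod

theorem eisensteinReps_zmod_two {c : ZMod 2} (hc : c ≠ 0) : eisensteinReps (ZMod 2) c = 3 := by
  obtain rfl : c = 1 := (by decide : ∀ c : ZMod 2, c ≠ 0 → c = 1) c hc
  rw [eisensteinReps, Nat.card_eq_fintype_card]
  decide

/-- The Kronecker symbol `(-3/p)` at primes `p ≠ 3` (at `p = 3` this is `-1`, not `0`). -/
noncomputable def kroneckerNegThree (p : ℕ) : ℤ :=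
  if p = 2 then -1 else if IsSquare (-3 : ZMod p) then 1 else -1

theorem quadraticChar_neg_three {p : ℕ} [Fact p.Prime] (hp2 : p ≠ 2) (hp3 : p ≠ 3) :
    quadraticChar (ZMod p) (-3) = kroneckerNegThree p := by
  have h3 : (-3 : ZMod p) ≠ 0 := neg_ne_zero.mpr (ZMod.three_ne_zero hp3)
  rw [kroneckerNegThree, if_neg hp2]
  split_ifs with hs
  · exact (quadraticChar_one_iff_isSquare h3).mpr hs
  · exact quadraticChar_neg_one_iff_not_isSquare.mpr hs

theorem eisensteinReps_zmod_one (c : ZMod 1) : eisensteinReps (ZMod 1) c = 1 := by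
  rw [eisensteinReps, Nat.card_eq_one_iff_unique]
  exact ⟨inferInstance, ⟨⟨(0, 0), Subsingleton.elim _ _⟩⟩⟩

theorem eisensteinReps_zmod_prime {p : ℕ} [Fact p.Prime] (hp3 : p ≠ 3) {c : ZMod p} (hc : c ≠ 0) :
    (eisensteinReps (ZMod p) c : ℤ) = p - kroneckerNegThree p := by
  by_cases hp2 : p = 2
  · subst hp2
    rw [eisensteinReps_zmod_two hc, kroneckerNegThree, if_pos rfl]
    norm_num
  · rw [eisensteinReps_of_field (by rwa [ZMod.ringChar_zmod_n]) (ZMod.three_ne_zero hp3) hc,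
      ZMod.card, quadraticChar_neg_three hp2 hp3]

theorem eisensteinReps_zmod_prime_pow_succ {p : ℕ} [hp : Fact p.Prime] (hp3 : p ≠ 3) {r : ℤ}
    (hr : ¬ (p : ℤ) ∣ r) (k : ℕ) :
    (eisensteinReps (ZMod (p ^ (k + 1))) r : ℤ) = p ^ k * (p - kroneckerNegThree p) := by
  induction k with
  | zero =>
    rw [zero_add, pow_one, pow_zero, one_mul]
    exact eisensteinReps_zmod_prime hp3 (by rwa [Ne, ZMod.intCast_zmod_eq_zero_iff_dvd])
  | succ k ih =>
    have hdvd : p ^ (k + 1) ∣ p ^ (k + 1 + 1) := pow_dvd_pow p (by omega)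
    have hunit {z : ℤ} (hz : ¬ (p : ℤ) ∣ z) : IsUnit (z : ZMod (p ^ (k + 1 + 1))) :=
      (ZMod.isUnit_intCast_iff_not_dvd_pow hp.out (by omega)).mpr hz
    have h3 : IsUnit (3 : ZMod (p ^ (k + 1 + 1))) := by
      exact_mod_cast hunit (z := 3) (by
        exact_mod_cast (Nat.prime_dvd_prime_iff_eq hp.out Nat.prime_three).not.mpr hp3)
    have hsq : p ^ (k + 1 + 1) ∣ (p ^ (k + 1)) ^ 2 := by
      rw [← pow_mul]
      exact pow_dvd_pow p (by omega)
    have hker : Nat.card (RingHom.ker (ZMod.castHom hdvd (ZMod (p ^ (k + 1))))) = p := by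
      have h := card_ker_mul_card_of_surjective _ (ZMod.castHom_surjective hdvd)
      rw [Nat.card_zmod, Nat.card_zmod] at h
      exact Nat.eq_of_mul_eq_mul_right (pow_pos hp.out.pos _) (h.trans (pow_succ' p (k + 1)))
    rw [eisensteinReps_eq_card_ker_mul (ZMod.castHom hdvd _) (ZMod.castHom_surjective hdvd)
      (fun x hx y hy => ZMod.mul_eq_zero_of_mem_ker_castHom hdvd hsq hx hy) h3 (hunit hr),
      map_intCast, hker]
    push_cast
    rw [ih]
    ring

theorem eisensteinReps_zmod_prime_pow {p k : ℕ} [Fact p.Prime] (hp3 : p ≠ 3) {r : ℤ}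
    (hr : ¬ (p : ℤ) ∣ r) (hk : k ≠ 0) :
    (eisensteinReps (ZMod (p ^ k)) r : ℚ) = p ^ k * (1 - kroneckerNegThree p / p) := by
  obtain ⟨k, rfl⟩ : ∃ j, k = j + 1 := ⟨k - 1, by omega⟩
  have hp0 : (p : ℚ) ≠ 0 := Nat.cast_ne_zero.mpr (Fact.out : p.Prime).ne_zero
  rw [← Int.cast_natCast, eisensteinReps_zmod_prime_pow_succ hp3 hr k]
  push_cast
  field_simp
  ring

/-- Let `N` be a positive integer coprime to `3` and `r` coprime to `N`.  Then the
number of solutions `(a,b) ∈ (ℤ/Nℤ)²` to `a² + ab + b² = −r` equals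
`N · ∏_{p | N} (1 − (1/p)·((−3/p)))`, where `((−3/p))` is the Kronecker symbol of
`−3` modulo `p`: it is `1` if `−3` is a nonzero square mod `p`, `−1` if it is a
nonsquare, with the convention `((−3/2)) = −1`. -/
theorem stmt_5 (N : ℕ) (hN : 0 < N) (h3 : Nat.Coprime N 3) (r : ℤ)
    (hr : Int.gcd r N = 1) :
    ((Nat.card {v : ZMod N × ZMod N //
        v.1 ^ 2 + v.1 * v.2 + v.2 ^ 2 = -(r : ZMod N)} : ℚ))
      = (N : ℚ) * ∏ p ∈ N.primeFactors,
          (1 - (if p = 2 then (-1 : ℚ)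
                else if IsSquare (-3 : ZMod p) then 1 else -1) / (p : ℚ)) := by
  have hmul := Nat.multiplicative_factorization (fun n => eisensteinReps (ZMod n) (-r : ℤ))
    (fun m n h => eisensteinReps_zmod_mul h (-r)) (eisensteinReps_zmod_one _) hN.ne'
  change (eisensteinReps (ZMod N) _ : ℚ) = _
  rw [← Int.cast_neg, hmul, Finsupp.prod, Nat.support_factorization, Nat.cast_prod]
  have hN' : (N : ℚ) = ∏ p ∈ N.primeFactors, ((p ^ N.factorization p : ℕ) : ℚ) := by
    rw [← Nat.cast_prod, ← Nat.support_factorization]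
    exact congrArg _ (Nat.prod_factorization_pow_eq_self hN.ne').symm
  rw [hN', ← prod_mul_distrib]
  refine prod_congr rfl fun p hp => ?_
  have hpN := Nat.dvd_of_mem_primeFactors hp
  have hpp := Nat.prime_of_mem_primeFactors hp
  have := Fact.mk hpp
  have hp3 : p ≠ 3 := by
    rintro rfl
    exact (Nat.Prime.coprime_iff_not_dvd Nat.prime_three).mp h3.symm hpN
  have hpr : ¬ (p : ℤ) ∣ -r := by
    rw [Int.dvd_neg]
    intro hpr
    have := Int.dvd_coe_gcd hpr (Int.natCast_dvd_natCast.mpr hpN)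
    rw [hr] at this
    exact hpp.not_dvd_one (Int.natCast_dvd_natCast.mp this)
  rw [eisensteinReps_zmod_prime_pow hp3 hpr (hpp.factorization_pos_of_dvd hN.ne' hpN).ne',
    kroneckerNegThree]
  push_cast
  congr
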